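/- arXiv:2106.05072 — 3 statements merged into one kernel-verified Lean document; each statement's English description precedes it below -/
import Mathlib

section
/- Let A be a nilpotent 2n×2n complex matrix belonging to Ω_{2n}. Then for every integer k ≥ 1, the number rank(A^{k−1}) + rank(A^{k+1}) − 2·rank(A^k) (which equals the number of Jordan blocks of size k in the Jordan normal form of A) is even; that is, each number in the Segre characteristic of A occurs an even number of times. -/
open Matrix

noncomputable section

/-- The `k×k` upper-triangular Jordan block with eigenvalue `lam`. -/
def jordanBlock {R : Type*} [Zero R] [One R] (lam : R) (k : ℕ) : Matrix (Fin k) (Fin k) R :=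
  Matrix.of fun i j => if (i : ℕ) = (j : ℕ) then lam else if (i : ℕ) + 1 = (j : ℕ) then 1 else 0

/-- The `k×k` sip matrix: ones on the main anti-diagonal, zeros elsewhere. -/
def sip (R : Type*) [Zero R] [One R] (k : ℕ) : Matrix (Fin k) (Fin k) R :=
  Matrix.of fun i j => if (i : ℕ) + (j : ℕ) = k - 1 then 1 else 0

/-- The order-preserving identification of `Fin k ⊕ Fin k` with `Fin (2*k)`. -/
def finTwoMul (k : ℕ) : (Fin k ⊕ Fin k) ≃ Fin (2 * k) :=
  finSumFinEquiv.trans (finCongr (two_mul k).symm)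

/-- Block-diagonal direct sum `M ⊕ N` of two `k×k` matrices, as a `(2k)×(2k)` matrix. -/
def dsum2 {R : Type*} [Zero R] {k : ℕ} (M N : Matrix (Fin k) (Fin k) R) :
    Matrix (Fin (2 * k)) (Fin (2 * k)) R :=
  Matrix.reindex (finTwoMul k) (finTwoMul k) (Matrix.fromBlocks M 0 0 N)

/-- The `2n×2n` complex matrix `[[A₁, conj A₂], [−A₂, conj A₁]]`. -/
def omegaMap {n : ℕ} (A₁ A₂ : Matrix (Fin n) (Fin n) ℂ) :
    Matrix (Fin (2 * n)) (Fin (2 * n)) ℂ :=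
  Matrix.reindex (finTwoMul n) (finTwoMul n)
    (Matrix.fromBlocks A₁ (A₂.map (starRingEnd ℂ)) (-A₂) (A₁.map (starRingEnd ℂ)))

/-- Membership in the real subalgebra `Ω_{2n}` of `2n×2n` complex matrices. -/
def InOmega {n : ℕ} (M : Matrix (Fin (2 * n)) (Fin (2 * n)) ℂ) : Prop :=
  ∃ A₁ A₂ : Matrix (Fin n) (Fin n) ℂ, M = omegaMap A₁ A₂

/-!
The matrix `J = omegaMap 0 1 = [[0, 1], [-1, 0]]` satisfies `J * conj J = -1`, and every `M ∈ Ω_{2n}`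
satisfies `M * J = J * conj M`. Hence `x ↦ J * conj x` is a conjugate-linear map squaring to `-1`
that preserves the range of `M`; together with multiplication by `i` it makes that range a module
over the quaternions. Its real dimension is then divisible by `4`, so its complex dimension, the
rank of `M`, is even. Since `Ω_{2n}` is closed under products, all the ranks of powers of `A` in the
Segre count are even.
-/

open ComplexConjugate Module

section QuaternionicStructure

variable {V : Type*} [AddCommGroup V] [Module ℂ V] [Module ℝ V] [IsScalarTower ℝ ℂ V]

def LinearMap.toRealLinearMap (J : V →ₗ⋆[ℂ] V) : V →ₗ[ℝ] V where
  toFun := J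
  map_add' := J.map_add
  map_smul' r x := by
    rw [← algebraMap_smul ℂ r x, J.map_smulₛₗ, Complex.coe_algebraMap, Complex.conj_ofReal,
      RingHom.id_apply, ← Complex.coe_algebraMap, algebraMap_smul]

def quaternionBasisOfAntilinear (J : V →ₗ⋆[ℂ] V) (hJ : ∀ x, J (J x) = -x) :
    QuaternionAlgebra.Basis (R := ℝ) (Module.End ℝ V) (-1) 0 (-1) where
  i := (Complex.I • LinearMap.id : V →ₗ[ℂ] V).restrictScalars ℝ
  j := J.toRealLinearMap
  k := (Complex.I • LinearMap.id : V →ₗ[ℂ] V).restrictScalars ℝ * J.toRealLinearMap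
  i_mul_i := by ext x; simp [smul_smul]
  j_mul_j := by ext x; simp [LinearMap.toRealLinearMap, hJ]
  i_mul_j := rfl
  j_mul_i := by ext x; simp [LinearMap.toRealLinearMap]

theorem even_finrank_of_antilinear_sq_eq_neg [FiniteDimensional ℂ V] (J : V →ₗ⋆[ℂ] V)
    (hJ : ∀ x, J (J x) = -x) : Even (finrank ℂ V) := by
  let f : Quaternion ℝ →ₐ[ℝ] Module.End ℝ V := (quaternionBasisOfAntilinear J hJ).liftHom
  let _ : Module (Quaternion ℝ) V := Module.compHom V f.toRingHom
  have _ : IsScalarTower ℝ (Quaternion ℝ) V :=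
    ⟨fun r q x => LinearMap.congr_fun (map_smul f r q) x⟩
  have _ : FiniteDimensional ℝ V := Module.Finite.trans ℂ V
  have hℂ := finrank_mul_finrank ℝ ℂ V
  have hℍ := finrank_mul_finrank ℝ (Quaternion ℝ) V
  rw [Complex.finrank_real_complex] at hℂ
  rw [Quaternion.finrank_eq_four] at hℍ
  exact ⟨finrank (Quaternion ℝ) V, by omega⟩

end QuaternionicStructure

namespace Matrix

theorem map_conj_map_conj {m n : Type*} (A : Matrix m n ℂ) : (A.map conj).map conj = A := by
  ext; simp

variable {ι : Type*} [Fintype ι]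

theorem star_mulVec_eq_map_conj_mulVec (M : Matrix ι ι ℂ) (v : ι → ℂ) :
    star (M *ᵥ v) = M.map conj *ᵥ star v :=
  funext fun i => RingHom.map_mulVec conj M v i

theorem even_rank_of_mul_eq_mul_map_conj [DecidableEq ι] {J M : Matrix ι ι ℂ}
    (hJ : J * J.map conj = -1) (hM : M * J = J * M.map conj) : Even M.rank := by
  let σ : (ι → ℂ) →ₗ⋆[ℂ] (ι → ℂ) := J.mulVecLin ∘ₛₗ (starLinearEquiv ℂ).toLinearMap
  have hσ_apply (v : ι → ℂ) : σ v = J *ᵥ star v := rfl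
  have hσσ (v : ι → ℂ) : σ (σ v) = -v := by
    rw [hσ_apply, hσ_apply, star_mulVec_eq_map_conj_mulVec, star_star, mulVec_mulVec, hJ,
      neg_mulVec, one_mulVec]
  have hσ_range : ∀ x ∈ LinearMap.range M.mulVecLin, σ x ∈ LinearMap.range M.mulVecLin := by
    rintro _ ⟨v, rfl⟩
    refine ⟨σ v, ?_⟩
    change M *ᵥ σ v = σ (M *ᵥ v)
    rw [hσ_apply, hσ_apply, star_mulVec_eq_map_conj_mulVec, mulVec_mulVec, mulVec_mulVec, hM]
  exact even_finrank_of_antilinear_sq_eq_neg (σ.restrict hσ_range) fun x => Subtype.ext (hσσ x)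

end Matrix

section Omega

variable {n : ℕ} (A₁ A₂ B₁ B₂ : Matrix (Fin n) (Fin n) ℂ)

theorem omegaMap_mul : omegaMap A₁ A₂ * omegaMap B₁ B₂ =
    omegaMap (A₁ * B₁ - A₂.map conj * B₂) (A₂ * B₁ + A₁.map conj * B₂) := by
  simp only [omegaMap, reindex_apply, submatrix_mul_equiv, fromBlocks_multiply, Matrix.map_add,
    Matrix.map_sub, map_add, map_sub, Matrix.map_mul, map_conj_map_conj, mul_neg, neg_mul,
    implies_true]
  congr 2 <;> abel

theorem omegaMap_map_conj :
    (omegaMap A₁ A₂).map conj = omegaMap (A₁.map conj) (A₂.map conj) := by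
  simp only [omegaMap, reindex_apply, ← submatrix_map, fromBlocks_map, Matrix.map_neg, map_neg,
    map_conj_map_conj, implies_true]

theorem omegaMap_one_zero : omegaMap (1 : Matrix (Fin n) (Fin n) ℂ) 0 = 1 := by
  simp [omegaMap, Matrix.map_one, fromBlocks_one]

theorem omegaMap_neg : omegaMap (-A₁) (-A₂) = -omegaMap A₁ A₂ := by
  rw [omegaMap, omegaMap, ← coe_reindexLinearEquiv ℝ, ← map_neg, fromBlocks_neg]
  simp only [Matrix.map_neg, map_neg, implies_true]

theorem omegaMap_zero_one_mul_map_conj :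
    omegaMap (0 : Matrix (Fin n) (Fin n) ℂ) 1 * (omegaMap 0 1).map conj = -1 := by
  simp [omegaMap_map_conj, omegaMap_mul, ← omegaMap_one_zero, ← omegaMap_neg]

theorem InOmega.one : InOmega (1 : Matrix (Fin (2 * n)) (Fin (2 * n)) ℂ) :=
  ⟨1, 0, omegaMap_one_zero.symm⟩

theorem InOmega.mul {M N : Matrix (Fin (2 * n)) (Fin (2 * n)) ℂ} (hM : InOmega M)
    (hN : InOmega N) : InOmega (M * N) := by
  obtain ⟨A₁, A₂, rfl⟩ := hM
  obtain ⟨B₁, B₂, rfl⟩ := hN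
  exact ⟨_, _, omegaMap_mul A₁ A₂ B₁ B₂⟩

theorem InOmega.pow {M : Matrix (Fin (2 * n)) (Fin (2 * n)) ℂ} (hM : InOmega M) (k : ℕ) :
    InOmega (M ^ k) := by
  induction k with
  | zero => exact pow_zero M ▸ InOmega.one
  | succ k ih => exact pow_succ M k ▸ ih.mul hM

theorem InOmega.mul_omegaMap_zero_one {M : Matrix (Fin (2 * n)) (Fin (2 * n)) ℂ}
    (hM : InOmega M) : M * omegaMap 0 1 = omegaMap 0 1 * M.map conj := by
  obtain ⟨A₁, A₂, rfl⟩ := hM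
  simp [omegaMap_map_conj, omegaMap_mul]

end Omega

theorem segre_characteristic_even_general {n : ℕ} (A : Matrix (Fin (2 * n)) (Fin (2 * n)) ℂ)
    (hA : InOmega A) (k : ℕ) :
    Even (((A ^ (k - 1)).rank : ℤ) + ((A ^ (k + 1)).rank : ℤ) - 2 * ((A ^ k).rank : ℤ)) := by
  have even_rank (m : ℕ) : Even (A ^ m).rank :=
    even_rank_of_mul_eq_mul_map_conj omegaMap_zero_one_mul_map_conj (hA.pow m).mul_omegaMap_zero_one
  obtain ⟨p, hp⟩ := even_rank (k - 1)
  obtain ⟨q, hq⟩ := even_rank (k + 1)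
  exact ⟨(p : ℤ) + q - (A ^ k).rank, by push_cast [hp, hq]; ring⟩

/-- **Corollary 2.2.** Each number in the Segre characteristic of a nilpotent matrix in
`Ω_{2n}` occurs an even number of times: for every `k ≥ 1`, the number of Jordan blocks
of size `k`, namely `rank(A^(k−1)) + rank(A^(k+1)) − 2·rank(A^k)`, is even. -/
theorem segre_characteristic_even {n : ℕ} (A : Matrix (Fin (2 * n)) (Fin (2 * n)) ℂ)
    (hA : InOmega A) (hnil : IsNilpotent A) (k : ℕ) (hk : 1 ≤ k) :
    Even (((A ^ (k - 1)).rank : ℤ) + ((A ^ (k + 1)).rank : ℤ) - 2 * ((A ^ k).rank : ℤ)) :=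
  segre_characteristic_even_general A hA k
end
end

section
/- Let Q₁, J₁ be n×n complex matrices and Q₂, J₂ be p×p complex matrices such that H₁ := Q₁ ⊕ conj(Q₁) ∈ Ω_{2n} and B₁ := J₁ ⊕ conj(J₁) ∈ Ω_{2n}, with H₁ invertible Hermitian and B₁ H₁-selfadjoint, and H₂ := Q₂ ⊕ conj(Q₂) ∈ Ω_{2p} and B₂ := J₂ ⊕ conj(J₂) ∈ Ω_{2p}, with H₂ invertible Hermitian and B₂ H₂-selfadjoint. Let A₁ = [[A₁₁⁽¹⁾, conj(A₁₂⁽¹⁾)],[−A₁₂⁽¹⁾, conj(A₁₁⁽¹⁾)]] ∈ Ω_{2n} be an H₁-selfadjoint matrix with A₁^m = B₁, and A₂ = [[A₁₁⁽²⁾, conj(A₁₂⁽²⁾)],[−A₁₂⁽²⁾, conj(A₁₁⁽²⁾)]] ∈ Ω_{2p} an H₂-selfadjoint matrix with A₂^m = B₂. Set B̂ := J₁ ⊕ J₂ ⊕ conj(J₁) ⊕ conj(J₂), Ĥ := Q₁ ⊕ Q₂ ⊕ conj(Q₁) ⊕ conj(Q₂), and let Â be the 2(n+p)×2(n+p) block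 matrix with block rows [A₁₁⁽¹⁾, 0, conj(A₁₂⁽¹⁾), 0], [0, A₁₁⁽²⁾, 0, conj(A₁₂⁽²⁾)], [−A₁₂⁽¹⁾, 0, conj(A₁₁⁽¹⁾), 0], [0, −A₁₂⁽²⁾, 0, conj(A₁₁⁽²⁾)]. Then B̂ and Â belong to Ω_{2(n+p)}, B̂ is Ĥ-selfadjoint, Â is Ĥ-selfadjoint, and Â^m = B̂. -/
open Matrix

noncomputable section

/-- The block-diagonal pair `M ⊕ conj M`, an element of `Ω_{2k}`. -/
def pairConj {k : ℕ} (M : Matrix (Fin k) (Fin k) ℂ) :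
    Matrix (Fin (2 * k)) (Fin (2 * k)) ℂ :=
  dsum2 M (M.map (starRingEnd ℂ))

/-- The order-preserving identification of `(Fin n ⊕ Fin p) ⊕ (Fin n ⊕ Fin p)`
with `Fin (2*(n+p))`. -/
def quadEquiv (n p : ℕ) : ((Fin n ⊕ Fin p) ⊕ (Fin n ⊕ Fin p)) ≃ Fin (2 * (n + p)) :=
  (Equiv.sumCongr finSumFinEquiv finSumFinEquiv).trans (finTwoMul (n + p))

/-- The block-diagonal direct sum `M₁ ⊕ M₂ ⊕ M₃ ⊕ M₄` of blocks of sizes `n, p, n, p`. -/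
def ddiag4 {n p : ℕ} (M₁ : Matrix (Fin n) (Fin n) ℂ) (M₂ : Matrix (Fin p) (Fin p) ℂ)
    (M₃ : Matrix (Fin n) (Fin n) ℂ) (M₄ : Matrix (Fin p) (Fin p) ℂ) :
    Matrix (Fin (2 * (n + p))) (Fin (2 * (n + p))) ℂ :=
  Matrix.reindex (quadEquiv n p) (quadEquiv n p)
    (Matrix.fromBlocks (Matrix.fromBlocks M₁ 0 0 M₂) 0 0 (Matrix.fromBlocks M₃ 0 0 M₄))

/-- The `2(n+p) × 2(n+p)` matrix `Â` with block rows
`[A₁₁⁽¹⁾, 0, conj A₁₂⁽¹⁾, 0]`, `[0, A₁₁⁽²⁾, 0, conj A₁₂⁽²⁾]`,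
`[−A₁₂⁽¹⁾, 0, conj A₁₁⁽¹⁾, 0]`, `[0, −A₁₂⁽²⁾, 0, conj A₁₁⁽²⁾]`. -/
def hatA {n p : ℕ} (B₁₁ B₁₂ : Matrix (Fin n) (Fin n) ℂ)
    (C₁₁ C₁₂ : Matrix (Fin p) (Fin p) ℂ) :
    Matrix (Fin (2 * (n + p))) (Fin (2 * (n + p))) ℂ :=
  Matrix.reindex (quadEquiv n p) (quadEquiv n p)
    (Matrix.fromBlocks
      (Matrix.fromBlocks B₁₁ 0 0 C₁₁)
      (Matrix.fromBlocks (B₁₂.map (starRingEnd ℂ)) 0 0 (C₁₂.map (starRingEnd ℂ)))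
      (Matrix.fromBlocks (-B₁₂) 0 0 (-C₁₂))
      (Matrix.fromBlocks (B₁₁.map (starRingEnd ℂ)) 0 0 (C₁₁.map (starRingEnd ℂ))))


/-!
Permuting indices so that the four blocks of each `Ω`-matrix come first for `n` and then for `p`
turns `Ĥ`, `B̂` and `Â` into the block-diagonal sums `H₁ ⊕ H₂`, `B₁ ⊕ B₂` and `A₁ ⊕ A₂`
(with each `Hᵢ, Bᵢ, Aᵢ` still in its `2 × 2` block form). Selfadjointness and the relation
`Aᵢ ^ m = Bᵢ` hold blockwise and are preserved by the simultaneous permutation of rows and columns.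
Membership in `Ω_{2(n+p)}` is read off from `Â = omegaMap (A₁₁⁽¹⁾ ⊕ A₁₁⁽²⁾) (A₁₂⁽¹⁾ ⊕ A₁₂⁽²⁾)`,
of which `B̂` is the case `A₁₂⁽¹⁾ = A₁₂⁽²⁾ = 0`.
-/

namespace Matrix

variable {α : Type*} {l m k a b : Type*}

theorem reindex_neg [Neg α] (e : l ≃ m) (f : a ≃ b) (A : Matrix l a α) :
    reindex e f (-A) = -reindex e f A :=
  rfl

theorem reindex_map {β : Type*} (g : α → β) (e : l ≃ m) (f : a ≃ b) (A : Matrix l a α) :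
    reindex e f (A.map g) = (reindex e f A).map g :=
  rfl

theorem reindex_mul_reindex [Fintype m] [Fintype k] [NonUnitalNonAssocSemiring α] (e : m ≃ k)
    (M N : Matrix m m α) : reindex e e M * reindex e e N = reindex e e (M * N) :=
  submatrix_mul_equiv M N _ _ _

theorem reindex_pow_eq_reindex_iff [Fintype m] [Fintype k] [DecidableEq m] [DecidableEq k]
    [Semiring α] (e : m ≃ k) (A B : Matrix m m α) (r : ℕ) :
    reindex e e A ^ r = reindex e e B ↔ A ^ r = B := by
  rw [← coe_reindexAlgEquiv ℕ, ← map_pow, (reindexAlgEquiv ℕ α e).injective.eq_iff]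

theorem reindex_mul_eq_conjTranspose_mul_iff [Fintype m] [Fintype k] [Semiring α] [StarRing α]
    (e : m ≃ k) (H A : Matrix m m α) :
    reindex e e H * reindex e e A = (reindex e e A)ᴴ * reindex e e H ↔ H * A = Aᴴ * H := by
  rw [conjTranspose_reindex, reindex_mul_reindex, reindex_mul_reindex,
    (reindex e e).injective.eq_iff]

theorem fromBlocks_diag_mul_eq_conjTranspose_mul [Fintype a] [Fintype b] [Semiring α]
    [StarRing α] {H₁ A₁ : Matrix a a α} {H₂ A₂ : Matrix b b α}
    (h₁ : H₁ * A₁ = A₁ᴴ * H₁) (h₂ : H₂ * A₂ = A₂ᴴ * H₂) :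
    fromBlocks H₁ 0 0 H₂ * fromBlocks A₁ 0 0 A₂ =
      (fromBlocks A₁ 0 0 A₂)ᴴ * fromBlocks H₁ 0 0 H₂ := by
  simp [fromBlocks_multiply, fromBlocks_conjTranspose, h₁, h₂]

theorem reindex_sumCongr_fromBlocks {l₁ l₂ m₁ m₂ : Type*} (e₁ : l ≃ l₁) (e₂ : m ≃ m₁)
    (f₁ : a ≃ l₂) (f₂ : b ≃ m₂) (A : Matrix l a α) (B : Matrix l b α) (C : Matrix m a α)
    (D : Matrix m b α) :
    reindex (e₁.sumCongr e₂) (f₁.sumCongr f₂) (fromBlocks A B C D) =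
      fromBlocks (reindex e₁ f₁ A) (reindex e₁ f₂ B) (reindex e₂ f₁ C) (reindex e₂ f₂ D) := by
  ext (i | i) (j | j) <;> rfl

theorem reindex_sumSumSumComm_fromBlocks [Zero α] (A B C D : Matrix a a α)
    (A' B' C' D' : Matrix b b α) :
    reindex (Equiv.sumSumSumComm a a b b) (Equiv.sumSumSumComm a a b b)
      (fromBlocks (fromBlocks A B C D) 0 0 (fromBlocks A' B' C' D')) =
    fromBlocks (fromBlocks A 0 0 A') (fromBlocks B 0 0 B') (fromBlocks C 0 0 C')
      (fromBlocks D 0 0 D') := by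
  ext ((i | i) | (i | i)) ((j | j) | (j | j)) <;> rfl

end Matrix

section Interleave

variable {n p : ℕ}

def interleaveEquiv (n p : ℕ) : ((Fin n ⊕ Fin n) ⊕ (Fin p ⊕ Fin p)) ≃ Fin (2 * (n + p)) :=
  (Equiv.sumSumSumComm _ _ _ _).trans (quadEquiv n p)

theorem ddiag4_eq_reindex (M₁ M₃ : Matrix (Fin n) (Fin n) ℂ) (M₂ M₄ : Matrix (Fin p) (Fin p) ℂ) :
    ddiag4 M₁ M₂ M₃ M₄ = reindex (interleaveEquiv n p) (interleaveEquiv n p)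
      (fromBlocks (fromBlocks M₁ 0 0 M₃) 0 0 (fromBlocks M₂ 0 0 M₄)) := by
  rw [interleaveEquiv, ← reindex_trans, Equiv.trans_apply, reindex_sumSumSumComm_fromBlocks,
    fromBlocks_zero]
  rfl

theorem hatA_eq_reindex (B₁₁ B₁₂ : Matrix (Fin n) (Fin n) ℂ)
    (C₁₁ C₁₂ : Matrix (Fin p) (Fin p) ℂ) :
    hatA B₁₁ B₁₂ C₁₁ C₁₂ = reindex (interleaveEquiv n p) (interleaveEquiv n p)
      (fromBlocks (fromBlocks B₁₁ (B₁₂.map (starRingEnd ℂ)) (-B₁₂) (B₁₁.map (starRingEnd ℂ))) 0 0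
        (fromBlocks C₁₁ (C₁₂.map (starRingEnd ℂ)) (-C₁₂) (C₁₁.map (starRingEnd ℂ)))) := by
  rw [interleaveEquiv, ← reindex_trans, Equiv.trans_apply, reindex_sumSumSumComm_fromBlocks]
  rfl

theorem hatA_eq_omegaMap (B₁₁ B₁₂ : Matrix (Fin n) (Fin n) ℂ)
    (C₁₁ C₁₂ : Matrix (Fin p) (Fin p) ℂ) :
    hatA B₁₁ B₁₂ C₁₁ C₁₂ =
      omegaMap (reindex finSumFinEquiv finSumFinEquiv (fromBlocks B₁₁ 0 0 C₁₁))
        (reindex finSumFinEquiv finSumFinEquiv (fromBlocks B₁₂ 0 0 C₁₂)) := by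
  rw [omegaMap, ← reindex_map, ← reindex_map, ← reindex_neg, ← reindex_sumCongr_fromBlocks]
  simp only [fromBlocks_map, fromBlocks_neg, Matrix.map_zero _ (map_zero _), neg_zero]
  rfl

theorem ddiag4_conj_eq_hatA (J₁ : Matrix (Fin n) (Fin n) ℂ) (J₂ : Matrix (Fin p) (Fin p) ℂ) :
    ddiag4 J₁ J₂ (J₁.map (starRingEnd ℂ)) (J₂.map (starRingEnd ℂ)) = hatA J₁ 0 J₂ 0 := by
  simp [ddiag4, hatA]

end Interleave

theorem block_per_block_root_general {n p : ℕ} (m : ℕ)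
    (Q₁ J₁ B₁₁ B₁₂ : Matrix (Fin n) (Fin n) ℂ) (Q₂ J₂ C₁₁ C₁₂ : Matrix (Fin p) (Fin p) ℂ)
    (hB₁sa : pairConj Q₁ * pairConj J₁ = (pairConj J₁)ᴴ * pairConj Q₁)
    (hB₂sa : pairConj Q₂ * pairConj J₂ = (pairConj J₂)ᴴ * pairConj Q₂)
    (hA₁sa : pairConj Q₁ * omegaMap B₁₁ B₁₂ = (omegaMap B₁₁ B₁₂)ᴴ * pairConj Q₁)
    (hA₁root : (omegaMap B₁₁ B₁₂) ^ m = pairConj J₁)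
    (hA₂sa : pairConj Q₂ * omegaMap C₁₁ C₁₂ = (omegaMap C₁₁ C₁₂)ᴴ * pairConj Q₂)
    (hA₂root : (omegaMap C₁₁ C₁₂) ^ m = pairConj J₂) :
    InOmega (n := n + p) (ddiag4 J₁ J₂ (J₁.map (starRingEnd ℂ)) (J₂.map (starRingEnd ℂ))) ∧
    InOmega (n := n + p) (hatA B₁₁ B₁₂ C₁₁ C₁₂) ∧
    ddiag4 Q₁ Q₂ (Q₁.map (starRingEnd ℂ)) (Q₂.map (starRingEnd ℂ)) *
        ddiag4 J₁ J₂ (J₁.map (starRingEnd ℂ)) (J₂.map (starRingEnd ℂ)) =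
      (ddiag4 J₁ J₂ (J₁.map (starRingEnd ℂ)) (J₂.map (starRingEnd ℂ)))ᴴ *
        ddiag4 Q₁ Q₂ (Q₁.map (starRingEnd ℂ)) (Q₂.map (starRingEnd ℂ)) ∧
    ddiag4 Q₁ Q₂ (Q₁.map (starRingEnd ℂ)) (Q₂.map (starRingEnd ℂ)) *
        hatA B₁₁ B₁₂ C₁₁ C₁₂ =
      (hatA B₁₁ B₁₂ C₁₁ C₁₂)ᴴ *
        ddiag4 Q₁ Q₂ (Q₁.map (starRingEnd ℂ)) (Q₂.map (starRingEnd ℂ)) ∧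
    (hatA B₁₁ B₁₂ C₁₁ C₁₂) ^ m =
      ddiag4 J₁ J₂ (J₁.map (starRingEnd ℂ)) (J₂.map (starRingEnd ℂ)) := by
  refine ⟨⟨_, _, (ddiag4_conj_eq_hatA J₁ J₂).trans (hatA_eq_omegaMap ..)⟩,
    ⟨_, _, hatA_eq_omegaMap ..⟩, ?_, ?_, ?_⟩
  · rw [ddiag4_eq_reindex, ddiag4_eq_reindex, reindex_mul_eq_conjTranspose_mul_iff]
    exact fromBlocks_diag_mul_eq_conjTranspose_mul
      ((reindex_mul_eq_conjTranspose_mul_iff _ _ _).1 hB₁sa)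
      ((reindex_mul_eq_conjTranspose_mul_iff _ _ _).1 hB₂sa)
  · rw [ddiag4_eq_reindex, hatA_eq_reindex, reindex_mul_eq_conjTranspose_mul_iff]
    exact fromBlocks_diag_mul_eq_conjTranspose_mul
      ((reindex_mul_eq_conjTranspose_mul_iff _ _ _).1 hA₁sa)
      ((reindex_mul_eq_conjTranspose_mul_iff _ _ _).1 hA₂sa)
  · rw [hatA_eq_reindex, ddiag4_eq_reindex, reindex_pow_eq_reindex_iff, fromBlocks_diagonal_pow,
      (reindex_pow_eq_reindex_iff _ _ _ _).1 hA₁root,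
      (reindex_pow_eq_reindex_iff _ _ _ _).1 hA₂root]

/-- **Lemma 2.6 (block-per-block roots).** Given `H₁`-selfadjoint `m`th root
`A₁ = [[B₁₁, conj B₁₂], [−B₁₂, conj B₁₁]] ∈ Ω_{2n}` of `B₁ = J₁ ⊕ conj J₁` and
`H₂`-selfadjoint `m`th root `A₂ = [[C₁₁, conj C₁₂], [−C₁₂, conj C₁₁]] ∈ Ω_{2p}` of
`B₂ = J₂ ⊕ conj J₂`, the matrix `Â` is an `Ĥ`-selfadjoint `m`th root of `B̂`, all in
`Ω_{2(n+p)}`, where `B̂ = J₁ ⊕ J₂ ⊕ conj J₁ ⊕ conj J₂`, `Ĥ = Q₁ ⊕ Q₂ ⊕ conj Q₁ ⊕ conj Q₂`. -/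
theorem block_per_block_root {n p : ℕ} (m : ℕ) (hm : 0 < m)
    (Q₁ J₁ B₁₁ B₁₂ : Matrix (Fin n) (Fin n) ℂ) (Q₂ J₂ C₁₁ C₁₂ : Matrix (Fin p) (Fin p) ℂ)
    (hH₁u : IsUnit (pairConj Q₁)) (hH₁herm : (pairConj Q₁).IsHermitian)
    (hB₁sa : pairConj Q₁ * pairConj J₁ = (pairConj J₁)ᴴ * pairConj Q₁)
    (hH₂u : IsUnit (pairConj Q₂)) (hH₂herm : (pairConj Q₂).IsHermitian)
    (hB₂sa : pairConj Q₂ * pairConj J₂ = (pairConj J₂)ᴴ * pairConj Q₂)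
    (hA₁sa : pairConj Q₁ * omegaMap B₁₁ B₁₂ = (omegaMap B₁₁ B₁₂)ᴴ * pairConj Q₁)
    (hA₁root : (omegaMap B₁₁ B₁₂) ^ m = pairConj J₁)
    (hA₂sa : pairConj Q₂ * omegaMap C₁₁ C₁₂ = (omegaMap C₁₁ C₁₂)ᴴ * pairConj Q₂)
    (hA₂root : (omegaMap C₁₁ C₁₂) ^ m = pairConj J₂) :
    InOmega (n := n + p) (ddiag4 J₁ J₂ (J₁.map (starRingEnd ℂ)) (J₂.map (starRingEnd ℂ))) ∧
    InOmega (n := n + p) (hatA B₁₁ B₁₂ C₁₁ C₁₂) ∧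
    ddiag4 Q₁ Q₂ (Q₁.map (starRingEnd ℂ)) (Q₂.map (starRingEnd ℂ)) *
        ddiag4 J₁ J₂ (J₁.map (starRingEnd ℂ)) (J₂.map (starRingEnd ℂ)) =
      (ddiag4 J₁ J₂ (J₁.map (starRingEnd ℂ)) (J₂.map (starRingEnd ℂ)))ᴴ *
        ddiag4 Q₁ Q₂ (Q₁.map (starRingEnd ℂ)) (Q₂.map (starRingEnd ℂ)) ∧
    ddiag4 Q₁ Q₂ (Q₁.map (starRingEnd ℂ)) (Q₂.map (starRingEnd ℂ)) *
        hatA B₁₁ B₁₂ C₁₁ C₁₂ =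
      (hatA B₁₁ B₁₂ C₁₁ C₁₂)ᴴ *
        ddiag4 Q₁ Q₂ (Q₁.map (starRingEnd ℂ)) (Q₂.map (starRingEnd ℂ)) ∧
    (hatA B₁₁ B₁₂ C₁₁ C₁₂) ^ m =
      ddiag4 J₁ J₂ (J₁.map (starRingEnd ℂ)) (J₂.map (starRingEnd ℂ)) :=
  block_per_block_root_general m Q₁ J₁ B₁₁ B₁₂ Q₂ J₂ C₁₁ C₁₂ hB₁sa hB₂sa hA₁sa hA₁root hA₂sa hA₂root

end
end

section
/- Let m be an odd positive integer, H̃ ∈ Ω_{2n} an invertible Hermitian complex matrix, and B̃ ∈ Ω_{2n} an H̃-selfadjoint matrix whose spectrum consists only of negative real numbers. Then there exists an H̃-selfadjoint matrix Ã ∈ Ω_{2n} with Ã^m = B̃. -/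
/-!
For odd `m` every nonzero real number has a real `m`-th root, so Lagrange interpolation gives a
real polynomial `q₀` with `q₀(μ)^m = μ` and `q₀(μ) ≠ 0` at every eigenvalue `μ` of `B`. Since the
eigenvalues are real, the characteristic polynomial of `B` is a real polynomial `p`; in `ℝ[X]/(p)`
the class of `q₀^m - X` is then nilpotent and that of `m q₀^(m-1)` is a unit, so Newton's method
corrects `q₀` to a real polynomial `q` with `p ∣ q^m - X`, i.e. `q(B)^m = B`.
A real polynomial in `B` inherits every intertwining relation `S B = B' S`. Both `H B = B* H` and
membership in `Ω_{2n}`, which reads `J conj(B) = B J` for `J = omegaMap 0 1 = [[0, 1], [-1, 0]]`,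
are relations of this kind.
-/

open Matrix

noncomputable section

open Polynomial

theorem Odd.exists_real_pow_eq {m : ℕ} (hodd : Odd m) (x : ℝ) : ∃ y : ℝ, y ^ m = x := by
  rcases le_total 0 x with hx | hx
  · exact ⟨x ^ (m⁻¹ : ℝ), Real.rpow_inv_natCast_pow hx hodd.pos.ne'⟩
  · refine ⟨-(-x) ^ (m⁻¹ : ℝ), ?_⟩
    rw [hodd.neg_pow, Real.rpow_inv_natCast_pow (neg_nonneg.2 hx) hodd.pos.ne', neg_neg]

theorem SemiconjBy.aeval {R A : Type*} [CommSemiring R] [Semiring A] [Algebra R A] {a x y : A}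
    (h : SemiconjBy a x y) (q : R[X]) : SemiconjBy a (aeval x q) (aeval y q) := by
  induction q using Polynomial.induction_on' with
  | add p q hp hq => simpa only [map_add] using hp.add_right hq
  | monomial k r =>
    simpa only [aeval_monomial] using
      SemiconjBy.mul_right (Algebra.commute_algebraMap_right r a) (h.pow_right k)

theorem Polynomial.star_aeval {R A : Type*} [CommSemiring R] [StarRing R] [TrivialStar R]
    [Semiring A] [StarRing A] [Algebra R A] [StarModule R A] (a : A) (q : R[X]) :
    star (aeval a q) = aeval (star a) q := by
  induction q using Polynomial.induction_on' with
  | add p q hp hq => simp only [map_add, star_add, hp, hq]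
  | monomial k r =>
    simp only [aeval_monomial, ← Algebra.smul_def, star_smul, star_trivial, star_pow]

theorem Matrix.map_conj_aeval {ι : Type*} [Fintype ι] [DecidableEq ι] (B : Matrix ι ι ℂ)
    (q : ℝ[X]) : (aeval B q).map (starRingEnd ℂ) = aeval (B.map (starRingEnd ℂ)) q :=
  (aeval_algHom_apply Complex.conjAe.toAlgHom.mapMatrix B q).symm

theorem exists_pow_eq_of_isNilpotent_of_isUnit {S : Type*} [CommRing S] {m : ℕ} {x b : S}
    (hnil : IsNilpotent (x ^ m - b)) (hunit : IsUnit ((m : S) * x ^ (m - 1))) :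
    ∃ u : S, u ^ m = b := by
  obtain ⟨u, ⟨-, hu⟩, -⟩ :=
    existsUnique_nilpotent_sub_and_aeval_eq_zero (x := x) (P := X ^ m - C b) (by simpa using hnil)
      (by simpa [derivative_X_pow] using hunit)
  exact ⟨u, sub_eq_zero.1 (by simpa using hu)⟩

theorem Polynomial.exists_dvd_pow_of_forall_aeval_eq_zero {k : Type*} (K : Type*) [Field k]
    [Field K] [IsAlgClosed K] [Algebra k K] {p g : k[X]} (hp : p ≠ 0)
    (h : ∀ a : K, aeval a p = 0 → aeval a g = 0) : ∃ n, p ∣ g ^ n := by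
  classical
  rcases eq_or_ne g 0 with rfl | hg
  · exact ⟨1, by simp⟩
  refine ⟨p.natDegree, ?_⟩
  have hp' : p.map (algebraMap k K) ≠ 0 := Polynomial.map_ne_zero hp
  have hg' : g.map (algebraMap k K) ≠ 0 := Polynomial.map_ne_zero hg
  rw [← map_dvd_map' (algebraMap k K), Polynomial.map_pow,
    IsAlgClosed.dvd_iff_roots_le_roots hp' (pow_ne_zero _ hg'), roots_pow, Multiset.le_iff_count]
  intro a
  rw [Multiset.count_nsmul]
  by_cases ha : aeval a p = 0
  · have hga : 0 < (g.map (algebraMap k K)).roots.count a := by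
      rw [Multiset.count_pos, mem_roots hg', IsRoot, eval_map_algebraMap]
      exact h a ha
    calc _ ≤ (p.map (algebraMap k K)).roots.card := Multiset.count_le_card _ _
      _ ≤ p.natDegree := (card_roots' _).trans natDegree_map_le
      _ ≤ _ := Nat.le_mul_of_pos_right _ hga
  · rw [Multiset.count_eq_zero_of_notMem]
    · exact Nat.zero_le _
    · rwa [mem_roots hp', IsRoot, eval_map_algebraMap]

theorem AdjoinRoot.isUnit_mk_of_isCoprime {R : Type*} [CommRing R] {p g : R[X]}
    (h : IsCoprime p g) : IsUnit (mk p g) := by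
  obtain ⟨a, b, hab⟩ := h
  refine IsUnit.of_mul_eq_one (mk p b) ?_
  simpa [mk_self, mul_comm] using congrArg (mk p) hab

theorem exists_aeval_pow_eq_of_isCoprime {k A : Type*} [CommRing k] [Ring A] [Algebra k A]
    {p q₀ : k[X]} {b : A} {m : ℕ} (hpb : aeval b p = 0) (hnil : ∃ n, p ∣ (q₀ ^ m - X) ^ n)
    (hcop : IsCoprime p (m * q₀ ^ (m - 1))) : ∃ q : k[X], aeval b q ^ m = b := by
  obtain ⟨n, hn⟩ := hnil
  obtain ⟨u, hu⟩ := exists_pow_eq_of_isNilpotent_of_isUnit (x := AdjoinRoot.mk p q₀)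
    (b := AdjoinRoot.root p)
    ⟨n, by rwa [← AdjoinRoot.mk_X, ← map_pow, ← map_sub, ← map_pow, AdjoinRoot.mk_eq_zero]⟩
    (by simpa using AdjoinRoot.isUnit_mk_of_isCoprime hcop)
  obtain ⟨q, rfl⟩ := AdjoinRoot.mk_surjective u
  have hq : p ∣ q ^ m - X := by
    rw [← AdjoinRoot.mk_eq_zero, map_sub, map_pow, hu, AdjoinRoot.mk_X, sub_self]
  exact ⟨q, by simpa [sub_eq_zero] using aeval_eq_zero_of_dvd_aeval_eq_zero hq hpb⟩

theorem Polynomial.Monic.mem_lifts_of_forall_root_im_eq_zero {P : ℂ[X]} (hP : P.Monic)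
    (h : ∀ μ ∈ P.roots, μ.im = 0) : P ∈ lifts (algebraMap ℝ ℂ) := by
  rw [(IsAlgClosed.splits P).eq_prod_roots_of_monic hP]
  refine Subsemiring.multiset_prod_mem _ _ fun f hf => ?_
  obtain ⟨μ, hμ, rfl⟩ := Multiset.mem_map.1 hf
  rw [mem_lifts]
  refine ⟨X - C μ.re, ?_⟩
  rw [Polynomial.map_sub, map_X, map_C]
  congr
  exact Complex.ext rfl (by simp [h μ hμ])

theorem exists_real_poly_aeval_pow_eq_on {m : ℕ} (hodd : Odd m) {s : Set ℂ} (hs : s.Finite)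
    (hreal : ∀ μ ∈ s, μ.im = 0) : ∃ q : ℝ[X], ∀ μ ∈ s, aeval μ q ^ m = μ := by
  classical
  choose root hroot using hodd.exists_real_pow_eq
  set q := Lagrange.interpolate (hs.toFinset.image Complex.re) id root
  refine ⟨q, fun μ hμ => ?_⟩
  have hμ_re : (μ.re : ℂ) = μ := Complex.ext rfl (by simp [hreal μ hμ])
  have hq : q.eval μ.re = root μ.re := Lagrange.eval_interpolate_at_node root (Set.injOn_id _)
    (Finset.mem_image_of_mem _ (hs.mem_toFinset.2 hμ))
  rw [← hμ_re, ← Complex.coe_algebraMap, aeval_algebraMap_apply, coe_aeval_eq_eval, hq,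
    ← map_pow, hroot]

theorem Matrix.exists_real_poly_aeval_pow_eq {ι : Type*} [Fintype ι] [DecidableEq ι] {m : ℕ}
    (hodd : Odd m) (B : Matrix ι ι ℂ) (hspec : ∀ μ ∈ spectrum ℂ B, μ.im = 0 ∧ μ ≠ 0) :
    ∃ q : ℝ[X], aeval B q ^ m = B := by
  obtain ⟨p, hp⟩ := (mem_lifts _).1 <| B.charpoly_monic.mem_lifts_of_forall_root_im_eq_zero
    fun μ hμ => (hspec μ (mem_spectrum_of_isRoot_charpoly (isRoot_of_mem_roots hμ))).1
  have hp0 : p ≠ 0 := fun h => B.charpoly_monic.ne_zero (by rw [← hp, h, Polynomial.map_zero])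
  have hroot : ∀ a : ℂ, aeval a p = 0 → a ∈ spectrum ℂ B := fun a ha =>
    mem_spectrum_iff_isRoot_charpoly.2 (by rwa [← hp, IsRoot, eval_map_algebraMap])
  obtain ⟨q₀, hq₀⟩ := exists_real_poly_aeval_pow_eq_on hodd B.finite_spectrum
    fun μ hμ => (hspec μ hμ).1
  refine exists_aeval_pow_eq_of_isCoprime (p := p) (q₀ := q₀) ?_ ?_ ?_
  · rw [← aeval_map_algebraMap ℂ, hp, aeval_self_charpoly]
  · exact exists_dvd_pow_of_forall_aeval_eq_zero ℂ hp0 fun a ha => by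
      simp [hq₀ a (hroot a ha)]
  · refine (isCoprime_iff_aeval_ne_zero_of_isAlgClosed ℝ ℂ _ _).2 fun a => ?_
    by_cases ha : aeval a p = 0
    · have hq₀a : aeval a q₀ ≠ 0 := fun h0 => (hspec a (hroot a ha)).2 <| by
        rw [← hq₀ a (hroot a ha), h0, zero_pow hodd.pos.ne']
      right
      simp [hodd.pos.ne', hq₀a]
    · exact .inl ha

theorem inOmega_iff_omegaMap_zero_one_mul {n : ℕ} (M : Matrix (Fin (2 * n)) (Fin (2 * n)) ℂ) :
    InOmega M ↔ omegaMap 0 1 * M.map (starRingEnd ℂ) = M * omegaMap 0 1 := by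
  obtain ⟨N, rfl⟩ := (reindex (finTwoMul n) (finTwoMul n)).surjective M
  rw [← fromBlocks_toBlocks N, eq_comm]
  simp only [InOmega, omegaMap, reindex_apply, ← submatrix_map, submatrix_mul_equiv]
  simp only [← reindex_apply, (reindex _ _).injective.eq_iff, fromBlocks_multiply, fromBlocks_map,
    fromBlocks_inj, ↓existsAndEq, true_and, mul_zero, mul_neg, mul_one, zero_add, zero_mul,
    map_zero, map_one, Matrix.map_one, one_mul, Matrix.map_zero, add_zero, neg_mul, neg_inj]
  constructor
  · rintro ⟨A₂, h₁₂, h₂₁, h₂₂⟩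
    refine ⟨?_, ?_, h₂₂, ?_⟩ <;> ext <;> simp [h₁₂, h₂₁, h₂₂]
  · rintro ⟨h₁₂, -, h₂₂, -⟩
    refine ⟨-N.toBlocks₂₁, ?_, by rw [neg_neg], h₂₂⟩
    rw [← neg_neg N.toBlocks₁₂, h₁₂]
    ext
    simp

theorem exists_root_negative_spectrum_odd_general {n : ℕ} (m : ℕ) (hodd : Odd m)
    (H B : Matrix (Fin (2 * n)) (Fin (2 * n)) ℂ)
    (hBΩ : InOmega B) (hBsa : H * B = Bᴴ * H)
    (hspec : ∀ μ ∈ spectrum ℂ B, μ.im = 0 ∧ μ.re < 0) :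
    ∃ A : Matrix (Fin (2 * n)) (Fin (2 * n)) ℂ,
      InOmega A ∧ H * A = Aᴴ * H ∧ A ^ m = B := by
  obtain ⟨q, hq⟩ := B.exists_real_poly_aeval_pow_eq hodd fun μ hμ =>
    ⟨(hspec μ hμ).1, fun h => by simpa [h] using (hspec μ hμ).2⟩
  refine ⟨aeval B q, ?_, ?_, hq⟩
  · rw [inOmega_iff_omegaMap_zero_one_mul] at hBΩ ⊢
    rw [map_conj_aeval]
    exact SemiconjBy.aeval hBΩ q
  · rw [← star_eq_conjTranspose, star_aeval]
    exact SemiconjBy.aeval hBsa q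

/-- **Theorem 3.7.** For `m` odd, an `H̃`-selfadjoint matrix in `Ω_{2n}` whose spectrum
consists only of negative real numbers has an `H̃`-selfadjoint `m`th root in `Ω_{2n}`. -/
theorem exists_root_negative_spectrum_odd {n : ℕ} (m : ℕ) (hm : 0 < m) (hodd : Odd m)
    (H B : Matrix (Fin (2 * n)) (Fin (2 * n)) ℂ)
    (hHΩ : InOmega H) (hHu : IsUnit H) (hHherm : H.IsHermitian)
    (hBΩ : InOmega B) (hBsa : H * B = Bᴴ * H)
    (hspec : ∀ μ ∈ spectrum ℂ B, μ.im = 0 ∧ μ.re < 0) :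
    ∃ A : Matrix (Fin (2 * n)) (Fin (2 * n)) ℂ,
      InOmega A ∧ H * A = Aᴴ * H ∧ A ^ m = B :=
  exists_root_negative_spectrum_odd_general m hodd H B hBΩ hBsa hspec

end
end
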